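/- The four-dimensional algebra C with basis e1, e2, e3, e4 and nonzero products e1e1 = e2, e4e4 = e2, e1e2 = e3 satisfies (aa)a = 0 and (aa)(aa) = 0 for all a (hence is unary Leibniz), but does not satisfy ⟨a,b,a⟩ = 0 since ⟨e1+e4, e4, e1+e4⟩ = -e3 ≠ 0. -/

import Mathlib

/-!
Every product lies in the span of `e2, e3`, and multiplying `e2` or `e3` on the right by
anything gives zero, so every left-normed product `(ab)c` vanishes; this gives both identities.
The Leibniz discriminant therefore reduces to `b(ac) - a(bc)`, a multiple of `e3`, which
for `a = c = e1 + e4`, `b = e4` equals `0 - e1·e2 = -e3`.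
-/

/-- Multiplication of the 4-dimensional algebra C with e1e1 = e2, e4e4 = e2,
e1e2 = e3 (extended bilinearly); basis vectors are indexed 0,1,2,3. -/
def mulC {K : Type*} [Field K] (v w : Fin 4 → K) : Fin 4 → K :=
  ![0, v 0 * w 0 + v 3 * w 3, v 0 * w 1, 0]

/-- The Leibniz discriminant ⟨a,b,c⟩ with respect to mulC. -/
def ltC {K : Type*} [Field K] (a b c : Fin 4 → K) : Fin 4 → K :=
  mulC (mulC a b) c - mulC a (mulC b c) + mulC b (mulC a c)

section

variable {K : Type*} [Field K]

theorem mulC_mulC_left (u v w : Fin 4 → K) :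
    mulC (mulC u v) w = 0 := by
  funext i
  fin_cases i <;> simp [mulC]

theorem mulC_mulC_right (a b c : Fin 4 → K) :
    mulC a (mulC b c) = Pi.single 2 (a 0 * (b 0 * c 0 + b 3 * c 3)) := by
  funext i
  fin_cases i <;> simp [mulC]

theorem ltC_eq_single (a b c : Fin 4 → K) :
    ltC a b c = Pi.single 2 (b 0 * (a 0 * c 0 + a 3 * c 3) - a 0 * (b 0 * c 0 + b 3 * c 3)) := by
  rw [ltC, mulC_mulC_left, mulC_mulC_right, mulC_mulC_right, Pi.single_sub]
  abel

end

theorem stmt_13_general {K : Type*} [Field K] :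
    (∀ a : Fin 4 → K, mulC (mulC a a) a = 0 ∧ mulC (mulC a a) (mulC a a) = 0) ∧
    ltC (Pi.single 0 1 + Pi.single 3 1) (Pi.single 3 1) (Pi.single 0 1 + Pi.single 3 1) =
      -(Pi.single 2 1 : Fin 4 → K) ∧
    ltC (Pi.single 0 1 + Pi.single 3 1) (Pi.single 3 1) (Pi.single 0 1 + Pi.single 3 1) ≠
      (0 : Fin 4 → K) := by
  have hlt : ltC (Pi.single 0 1 + Pi.single 3 1) (Pi.single 3 1)
      (Pi.single 0 1 + Pi.single 3 1) = -(Pi.single 2 1 : Fin 4 → K) := by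
    rw [ltC_eq_single, ← Pi.single_neg]
    congr 1
    simp
  refine ⟨fun a => ⟨mulC_mulC_left a a a, mulC_mulC_left a a _⟩, hlt, ?_⟩
  rw [hlt, neg_ne_zero]
  exact Pi.single_ne_zero_iff.mpr one_ne_zero

theorem stmt_13 {K : Type*} [Field K] (h2 : (2 : K) ≠ 0) :
    (∀ a : Fin 4 → K, mulC (mulC a a) a = 0 ∧ mulC (mulC a a) (mulC a a) = 0) ∧
    ltC (Pi.single 0 1 + Pi.single 3 1) (Pi.single 3 1) (Pi.single 0 1 + Pi.single 3 1) =
      -(Pi.single 2 1 : Fin 4 → K) ∧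
    ltC (Pi.single 0 1 + Pi.single 3 1) (Pi.single 3 1) (Pi.single 0 1 + Pi.single 3 1) ≠
      (0 : Fin 4 → K) :=
  stmt_13_general
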